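/- Let A ∈ ℝ^{m×n} have rank n, R_s ∈ ℝ^{n×n} invertible, E_s, E_A with ‖E_s‖·‖R_s⁻¹‖ < 1, ε_A = ‖E_A‖/‖A‖, A_p = A R_s⁻¹, A_1 = (A + E_A)(R_s + E_s)⁻¹. Let x* = A† b, and suppose ŷ ≠ 0 and x̂ ≠ 0 satisfy A_1ᵀ A_1 ŷ = A_1ᵀ b and (R_s + E_s) x̂ = ŷ. Then ‖x̂ − x*‖/‖x̂‖ ≤ κ(R_s)·κ(A_p)·ε_A · ( κ(A_p)·κ(R_s)·‖A x̂ − b‖/(‖A‖·‖x̂‖) + 1 + κ(A)·ε_A ). -/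

import Mathlib

open Matrix

/-- Spectral (operator 2-) norm of a real matrix. -/
noncomputable def spNorm {m n : ℕ} (M : Matrix (Fin m) (Fin n) ℝ) : ℝ :=
  ‖LinearMap.toContinuousLinearMap (Matrix.toEuclideanLin M)‖

/-- Euclidean 2-norm of a real vector. -/
noncomputable def vNorm {n : ℕ} (x : Fin n → ℝ) : ℝ :=
  ‖(WithLp.equiv 2 (Fin n → ℝ)).symm x‖

/-- Moore–Penrose left inverse of a full column rank matrix. -/
noncomputable def pinv {m n : ℕ} (A : Matrix (Fin m) (Fin n) ℝ) : Matrix (Fin n) (Fin m) ℝ :=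
  (Aᵀ * A)⁻¹ * Aᵀ

/-- Condition number with respect to left inversion. -/
noncomputable def kappa {m n : ℕ} (A : Matrix (Fin m) (Fin n) ℝ) : ℝ :=
  spNorm A * spNorm (pinv A)

/-!
Write `r = (A + E_A) x̂ - b`. As `‖R_s⁻¹ E_s‖ < 1`, `R_s + E_s` is invertible, and undoing the
preconditioner shows that `x̂` solves the normal equations of the perturbed problem,
`(A + E_A)ᵀ r = 0`. Subtracting the normal equations `Aᵀ A x* = Aᵀ b` gives the error identity
`x̂ - x* = -(Aᵀ A)⁻¹ E_Aᵀ r - A† E_A x̂`. Since `(Aᵀ A)⁻¹ = A† A†ᵀ` this yields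
`‖x̂ - x*‖ ≤ ‖A†‖² ‖E_A‖ (‖A x̂ - b‖ + ‖E_A‖ ‖x̂‖) + ‖A†‖ ‖E_A‖ ‖x̂‖`, and the factorisation
`A = A_p R_s` gives `κ(A) ≤ κ(A_p) κ(R_s)`, which turns this into the stated bound.
-/

open scoped Matrix.Norms.L2Operator

section Norms

variable {m n k : ℕ}

lemma spNorm_nonneg (M : Matrix (Fin m) (Fin n) ℝ) : 0 ≤ spNorm M := norm_nonneg M

lemma spNorm_mul_le (M : Matrix (Fin m) (Fin n) ℝ) (N : Matrix (Fin n) (Fin k) ℝ) :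
    spNorm (M * N) ≤ spNorm M * spNorm N :=
  l2_opNorm_mul M N

lemma spNorm_transpose (M : Matrix (Fin m) (Fin n) ℝ) : spNorm Mᵀ = spNorm M := by
  simp only [spNorm, ← conjTranspose_eq_transpose_of_trivial]
  exact l2_opNorm_conjTranspose M

lemma vNorm_nonneg (x : Fin n → ℝ) : 0 ≤ vNorm x := norm_nonneg _

lemma vNorm_pos {x : Fin n → ℝ} (hx : x ≠ 0) : 0 < vNorm x :=
  norm_pos_iff.mpr (by simpa using hx)

lemma vNorm_add_le (x y : Fin n → ℝ) : vNorm (x + y) ≤ vNorm x + vNorm y :=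
  norm_add_le _ _

lemma vNorm_neg (x : Fin n → ℝ) : vNorm (-x) = vNorm x := norm_neg _

lemma vNorm_mulVec_le (M : Matrix (Fin m) (Fin n) ℝ) (x : Fin n → ℝ) :
    vNorm (M *ᵥ x) ≤ spNorm M * vNorm x :=
  l2_opNorm_mulVec M _

lemma vNorm_mulVec_mulVec_le (M : Matrix (Fin m) (Fin n) ℝ) (N : Matrix (Fin n) (Fin k) ℝ)
    (x : Fin k → ℝ) : vNorm (M *ᵥ N *ᵥ x) ≤ spNorm M * (spNorm N * vNorm x) :=
  (vNorm_mulVec_le M _).trans <|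
    mul_le_mul_of_nonneg_left (vNorm_mulVec_le N x) (spNorm_nonneg M)

end Norms

lemma Matrix.isUnit_det_of_rank_eq_card {ι K : Type*} [Fintype ι] [DecidableEq ι] [Field K]
    {M : Matrix ι ι K} (h : M.rank = Fintype.card ι) : IsUnit M.det := by
  rw [← isUnit_iff_isUnit_det, ← mulVec_surjective_iff_isUnit]
  exact LinearMap.range_eq_top.mp <|
    Submodule.eq_top_of_finrank_eq (h.trans (Module.finrank_fintype_fun_eq_card K).symm)

lemma isUnit_det_add_of_spNorm_mul_lt_one {n : ℕ} {R E : Matrix (Fin n) (Fin n) ℝ}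
    (hR : IsUnit R.det) (hE : spNorm E * spNorm R⁻¹ < 1) : IsUnit (R + E).det := by
  have hsmall : ‖-(R⁻¹ * E)‖ < 1 := by
    rw [norm_neg]
    exact (norm_mul_le _ _).trans_lt (by rw [mul_comm]; exact hE)
  have hfactor : R + E = R * (1 - -(R⁻¹ * E)) := by
    rw [sub_neg_eq_add, mul_add, mul_one, mul_nonsing_inv_cancel_left _ _ hR]
  rw [hfactor, det_mul]
  exact hR.mul ((isUnit_iff_isUnit_det _).mp (isUnit_one_sub_of_norm_lt_one hsmall))

section Pinv

variable {m n : ℕ}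

lemma pinv_eq_inv {R : Matrix (Fin n) (Fin n) ℝ} (hR : IsUnit R.det) : pinv R = R⁻¹ := by
  rw [pinv, Matrix.mul_inv_rev, Matrix.mul_assoc, nonsing_inv_mul _ (by rwa [det_transpose]),
    Matrix.mul_one]

lemma pinv_mul_of_isUnit (B : Matrix (Fin m) (Fin n) ℝ) {R : Matrix (Fin n) (Fin n) ℝ}
    (hR : IsUnit R.det) : pinv (B * R) = R⁻¹ * pinv B := by
  have hRt : IsUnit Rᵀ.det := by rwa [det_transpose]
  rw [pinv, pinv, transpose_mul, show Rᵀ * Bᵀ * (B * R) = Rᵀ * (Bᵀ * B) * R by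
    simp only [Matrix.mul_assoc], Matrix.mul_inv_rev, Matrix.mul_inv_rev]
  simp only [Matrix.mul_assoc, nonsing_inv_mul_cancel_left _ _ hRt]

lemma kappa_mul_le (B : Matrix (Fin m) (Fin n) ℝ) {R : Matrix (Fin n) (Fin n) ℝ}
    (hR : IsUnit R.det) : kappa (B * R) ≤ kappa B * kappa R := by
  rw [kappa, kappa, kappa, pinv_mul_of_isUnit B hR, pinv_eq_inv hR]
  calc spNorm (B * R) * spNorm (R⁻¹ * pinv B)
      ≤ (spNorm B * spNorm R) * (spNorm R⁻¹ * spNorm (pinv B)) :=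
        mul_le_mul (spNorm_mul_le B R) (spNorm_mul_le _ _) (spNorm_nonneg _)
          (mul_nonneg (spNorm_nonneg B) (spNorm_nonneg R))
    _ = spNorm B * spNorm (pinv B) * (spNorm R * spNorm R⁻¹) := by ring

lemma inv_transpose_mul_self_eq {A : Matrix (Fin m) (Fin n) ℝ} (hA : IsUnit (Aᵀ * A).det) :
    (Aᵀ * A)⁻¹ = pinv A * (pinv A)ᵀ := by
  have hsymm : ((Aᵀ * A)⁻¹)ᵀ = (Aᵀ * A)⁻¹ := by
    rw [transpose_nonsing_inv, transpose_mul, transpose_transpose]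
  rw [pinv, transpose_mul, transpose_transpose, hsymm]
  calc (Aᵀ * A)⁻¹ = (Aᵀ * A)⁻¹ * ((Aᵀ * A) * (Aᵀ * A)⁻¹) := by
        rw [mul_nonsing_inv _ hA, Matrix.mul_one]
    _ = (Aᵀ * A)⁻¹ * Aᵀ * (A * (Aᵀ * A)⁻¹) := by simp only [Matrix.mul_assoc]

lemma spNorm_inv_transpose_mul_self_le {A : Matrix (Fin m) (Fin n) ℝ}
    (hA : IsUnit (Aᵀ * A).det) : spNorm (Aᵀ * A)⁻¹ ≤ spNorm (pinv A) * spNorm (pinv A) := by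
  calc spNorm (Aᵀ * A)⁻¹ ≤ spNorm (pinv A) * spNorm (pinv A)ᵀ := by
        rw [inv_transpose_mul_self_eq hA]; exact spNorm_mul_le _ _
    _ = spNorm (pinv A) * spNorm (pinv A) := by rw [spNorm_transpose]

lemma transpose_mul_self_mulVec_pinv_mulVec {A : Matrix (Fin m) (Fin n) ℝ}
    (hA : IsUnit (Aᵀ * A).det) (b : Fin m → ℝ) : (Aᵀ * A) *ᵥ (pinv A *ᵥ b) = Aᵀ *ᵥ b := by
  rw [pinv, mulVec_mulVec, ← Matrix.mul_assoc, mul_nonsing_inv _ hA, Matrix.one_mul]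

end Pinv

section LeastSquares

variable {m n : ℕ}

lemma transpose_mulVec_residual_eq_zero_of_preconditioned {B : Matrix (Fin m) (Fin n) ℝ}
    {M : Matrix (Fin n) (Fin n) ℝ} (hM : IsUnit M.det) {b : Fin m → ℝ} {x y : Fin n → ℝ}
    (hy : ((B * M⁻¹)ᵀ * (B * M⁻¹)) *ᵥ y = (B * M⁻¹)ᵀ *ᵥ b) (hx : M *ᵥ x = y) :
    Bᵀ *ᵥ (B *ᵥ x - b) = 0 := by
  have hBx : (B * M⁻¹) *ᵥ y = B *ᵥ x := by
    rw [← hx, mulVec_mulVec, nonsing_inv_mul_cancel_right _ _ hM]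
  have hres : M⁻¹ᵀ *ᵥ (Bᵀ *ᵥ (B *ᵥ x - b)) = 0 := by
    rw [mulVec_mulVec, ← transpose_mul, mulVec_sub, ← hBx, mulVec_mulVec, hy, sub_self]
  have hMt : IsUnit Mᵀ.det := by rwa [det_transpose]
  calc Bᵀ *ᵥ (B *ᵥ x - b) = Mᵀ *ᵥ (Mᵀ⁻¹ *ᵥ (Bᵀ *ᵥ (B *ᵥ x - b))) := by
        rw [mulVec_mulVec, mul_nonsing_inv _ hMt, one_mulVec]
    _ = 0 := by rw [← transpose_nonsing_inv, hres, mulVec_zero]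

lemma sub_pinv_mulVec_eq {A E : Matrix (Fin m) (Fin n) ℝ} (hA : IsUnit (Aᵀ * A).det)
    {b : Fin m → ℝ} {x : Fin n → ℝ} (hx : (A + E)ᵀ *ᵥ ((A + E) *ᵥ x - b) = 0) :
    x - pinv A *ᵥ b =
      -((Aᵀ * A)⁻¹ *ᵥ Eᵀ *ᵥ ((A + E) *ᵥ x - b) + pinv A *ᵥ E *ᵥ x) := by
  have hresidual : Aᵀ *ᵥ (A *ᵥ x - b) = -(Eᵀ *ᵥ ((A + E) *ᵥ x - b) + Aᵀ *ᵥ E *ᵥ x) := by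
    rw [eq_neg_iff_add_eq_zero, ← hx]
    simp only [transpose_add, add_mulVec, mulVec_add, mulVec_sub]
    abel
  have hsolve : x - pinv A *ᵥ b = (Aᵀ * A)⁻¹ *ᵥ Aᵀ *ᵥ (A *ᵥ x - b) := by
    simp only [mulVec_sub, mulVec_mulVec, nonsing_inv_mul _ hA, one_mulVec, pinv]
  rw [hsolve, hresidual]
  simp only [mulVec_neg, mulVec_add, pinv, mulVec_mulVec, Matrix.mul_assoc]

lemma vNorm_sub_pinv_mulVec_le {A E : Matrix (Fin m) (Fin n) ℝ} (hA : IsUnit (Aᵀ * A).det)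
    {b : Fin m → ℝ} {x : Fin n → ℝ} (hx : (A + E)ᵀ *ᵥ ((A + E) *ᵥ x - b) = 0) :
    vNorm (x - pinv A *ᵥ b) ≤
      spNorm (pinv A) * spNorm (pinv A) * spNorm E * (vNorm (A *ᵥ x - b) + spNorm E * vNorm x)
        + spNorm (pinv A) * spNorm E * vNorm x := by
  have hres : vNorm ((A + E) *ᵥ x - b) ≤ vNorm (A *ᵥ x - b) + spNorm E * vNorm x := by
    rw [add_mulVec, add_sub_right_comm]
    exact (vNorm_add_le _ _).trans (by gcongr; exact vNorm_mulVec_le E x)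
  have hfirst := vNorm_mulVec_mulVec_le (Aᵀ * A)⁻¹ Eᵀ ((A + E) *ᵥ x - b)
  rw [spNorm_transpose] at hfirst
  rw [sub_pinv_mulVec_eq hA hx, vNorm_neg]
  calc _ ≤ _ := vNorm_add_le _ _
    _ ≤ spNorm (Aᵀ * A)⁻¹ * (spNorm E * vNorm ((A + E) *ᵥ x - b))
          + spNorm (pinv A) * (spNorm E * vNorm x) :=
        add_le_add hfirst (vNorm_mulVec_mulVec_le (pinv A) E x)
    _ ≤ spNorm (pinv A) * spNorm (pinv A) * (spNorm E * (vNorm (A *ᵥ x - b) + spNorm E * vNorm x))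
          + spNorm (pinv A) * (spNorm E * vNorm x) := by
        have hE := spNorm_nonneg E
        gcongr
        · exact mul_nonneg hE (vNorm_nonneg _)
        · exact mul_nonneg (spNorm_nonneg _) (spNorm_nonneg _)
        · exact spNorm_inv_transpose_mul_self_le hA
    _ = _ := by ring

end LeastSquares

lemma relative_bound_of_absolute_bound {D X a P e ρ c : ℝ} (ha : 0 < a) (hX : 0 < X) (hP : 0 ≤ P)
    (he : 0 ≤ e) (hρ : 0 ≤ ρ) (hc : a * P ≤ c)
    (hD : D ≤ P * P * e * (ρ + e * X) + P * e * X) :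
    D / X ≤ c * (e / a) * (c * (ρ / (a * X)) + 1 + a * P * (e / a)) := by
  set u := e / a
  set v := ρ / (a * X)
  have hu : 0 ≤ u := div_nonneg he ha.le
  have hv : 0 ≤ v := div_nonneg hρ (mul_pos ha hX).le
  have hk : 0 ≤ a * P := mul_nonneg ha.le hP
  have hrescale : P * P * e * (ρ + e * X) + P * e * X
      = X * ((a * P) ^ 2 * u * v + (a * P) ^ 2 * u * u + a * P * u) := by
    simp only [u, v]; field_simp
  have hgap : c * u * (c * v + 1 + a * P * u)
        - ((a * P) ^ 2 * u * v + (a * P) ^ 2 * u * u + a * P * u)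
      = (c - a * P) * ((c + a * P) * u * v + a * P * u * u + u) := by ring
  have hpos : 0 ≤ (c + a * P) * u * v + a * P * u * u + u :=
    add_nonneg (add_nonneg (mul_nonneg (mul_nonneg (by linarith) hu) hv)
      (mul_nonneg (mul_nonneg hk hu) hu)) hu
  rw [div_le_iff₀ hX, mul_comm _ X]
  refine hD.trans (hrescale ▸ mul_le_mul_of_nonneg_left ?_ hX.le)
  rw [← sub_nonneg, hgap]
  exact mul_nonneg (sub_nonneg.mpr hc) hpos

theorem stmt_6_general {m n : ℕ} (A EA : Matrix (Fin m) (Fin n) ℝ) (Rs Es : Matrix (Fin n) (Fin n) ℝ)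
    (b : Fin m → ℝ) (xh yh : Fin n → ℝ)
    (hA : A.rank = n) (hR : IsUnit Rs.det) (hEs : spNorm Es * spNorm Rs⁻¹ < 1)
    (εA : ℝ) (hεA : εA = spNorm EA / spNorm A)
    (Ap : Matrix (Fin m) (Fin n) ℝ) (hAp : Ap = A * Rs⁻¹)
    (A₁ : Matrix (Fin m) (Fin n) ℝ) (hA₁ : A₁ = (A + EA) * (Rs + Es)⁻¹)
    (xs : Fin n → ℝ) (hxs : xs = pinv A *ᵥ b)
    (hy : (A₁ᵀ * A₁) *ᵥ yh = A₁ᵀ *ᵥ b)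
    (hx : (Rs + Es) *ᵥ xh = yh)
    (hxne : xh ≠ 0) :
    vNorm (xh - xs) / vNorm xh ≤
      kappa Rs * kappa Ap * εA *
        (kappa Ap * kappa Rs * (vNorm (A *ᵥ xh - b) / (spNorm A * vNorm xh))
          + 1 + kappa A * εA) := by
  subst hεA hAp hA₁ hxs
  have hAtA : IsUnit (Aᵀ * A).det :=
    isUnit_det_of_rank_eq_card (by rw [rank_transpose_mul_self, hA, Fintype.card_fin])
  have hnormal := transpose_mulVec_residual_eq_zero_of_preconditioned
    (isUnit_det_add_of_spNorm_mul_lt_one hR hEs) hy hx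
  have hκ : kappa A ≤ kappa (A * Rs⁻¹) * kappa Rs := by
    simpa only [nonsing_inv_mul_cancel_right _ _ hR] using kappa_mul_le (A * Rs⁻¹) hR
  have hApos : 0 < spNorm A := show 0 < ‖A‖ from norm_pos_iff.mpr <| by
    rintro rfl
    rw [rank_zero] at hA
    subst hA
    exact hxne (Subsingleton.elim _ _)
  rw [mul_comm (kappa Rs)]
  exact relative_bound_of_absolute_bound hApos (vNorm_pos hxne) (spNorm_nonneg _) (spNorm_nonneg _)
    (vNorm_nonneg _) hκ (vNorm_sub_pinv_mulVec_le hAtA hnormal)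

theorem stmt_6 {m n : ℕ} (A EA : Matrix (Fin m) (Fin n) ℝ) (Rs Es : Matrix (Fin n) (Fin n) ℝ)
    (b : Fin m → ℝ) (xh yh : Fin n → ℝ)
    (hA : A.rank = n) (hR : IsUnit Rs.det) (hEs : spNorm Es * spNorm Rs⁻¹ < 1)
    (εA : ℝ) (hεA : εA = spNorm EA / spNorm A)
    (Ap : Matrix (Fin m) (Fin n) ℝ) (hAp : Ap = A * Rs⁻¹)
    (A₁ : Matrix (Fin m) (Fin n) ℝ) (hA₁ : A₁ = (A + EA) * (Rs + Es)⁻¹)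
    (xs : Fin n → ℝ) (hxs : xs = pinv A *ᵥ b)
    (hy : (A₁ᵀ * A₁) *ᵥ yh = A₁ᵀ *ᵥ b)
    (hx : (Rs + Es) *ᵥ xh = yh)
    (hyne : yh ≠ 0) (hxne : xh ≠ 0) :
    vNorm (xh - xs) / vNorm xh ≤
      kappa Rs * kappa Ap * εA *
        (kappa Ap * kappa Rs * (vNorm (A *ᵥ xh - b) / (spNorm A * vNorm xh))
          + 1 + kappa A * εA) :=
  stmt_6_general A EA Rs Es b xh yh hA hR hEs εA hεA Ap hAp A₁ hA₁ xs hxs hy hx hxne
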